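/- Let R be a commutative ring that is also a ℚ-algebra, L a Lie algebra over R, and δ : L → L an R-linear Lie derivation. Let A ∈ L be such that ad_A is nilpotent, and for ω ∈ L set δ_ω = δ + ad_ω. Then exp(ad_A) ∘ δ_ω ∘ exp(−ad_A) = δ_{ω'}, where ω' = exp(ad_A)(ω) − Σ_{q≥0} (1/(q+1)!) ((ad_A)^{q})(δ A) (a finite sum); that is, conjugating the deformed operator δ + ad_ω by exp(ad_A) yields δ + ad applied to the gauge transform e^{A}·ω = e^{ad_A} ω + ((1 − e^{ad_A})/ad_A)(δ A). -/

import Mathlib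

/-!
In an associative `ℚ`-algebra, conjugation by `exp a` of a nilpotent `a` is `exp (ad a)`,
because `ad a` is the sum of the commuting nilpotent operators `x ↦ a * x` and `x ↦ -(x * a)`.
Apply this in `End L` to `a = ad A`: the operator `ad (ad A)` sends `ad y` to `ad ⁅A, y⁆` and,
`δ` being a derivation, sends `δ` to `-ad (δ A)`. Hence `exp (ad (ad A))` sends `ad ω` to
`ad (exp (ad A) ω)` and `δ` to `δ - ad (∑ (ad A) ^ q (δ A) / (q + 1)!)`.
-/

open Finset

namespace IsNilpotent

variable {S : Type*} [Ring S] [Algebra ℚ S]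

theorem exp_mulLeft {a : S} (ha : IsNilpotent a) :
    exp (LinearMap.mulLeft ℚ a) = LinearMap.mulLeft ℚ (exp a) :=
  (ha.map_exp (Algebra.lmul ℚ S)).symm

theorem exp_mulRight {a : S} (ha : IsNilpotent a) :
    exp (LinearMap.mulRight ℚ a) = LinearMap.mulRight ℚ (exp a) := by
  obtain ⟨n, hn⟩ := ha
  have hn' : LinearMap.mulRight ℚ a ^ n = 0 := by
    rw [LinearMap.pow_mulRight, hn, LinearMap.mulRight_zero_eq_zero]
  ext x
  simp [exp_eq_sum hn, exp_eq_sum hn', LinearMap.pow_mulRight, mul_sum]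

attribute [local instance] LieRing.ofAssociativeRing in
theorem exp_mul_mul_exp_neg {a : S} (ha : IsNilpotent a) (x : S) :
    exp a * x * exp (-a) = exp (LieAlgebra.ad ℚ S a) x := by
  have hl : IsNilpotent (LinearMap.mulLeft ℚ a) := ha.map (Algebra.lmul ℚ S)
  have hr : IsNilpotent (LinearMap.mulRight ℚ (-a)) := by
    obtain ⟨n, hn⟩ := ha.neg
    exact ⟨n, by rw [LinearMap.pow_mulRight, hn, LinearMap.mulRight_zero_eq_zero]⟩
  have had : LieAlgebra.ad ℚ S a = LinearMap.mulLeft ℚ a + LinearMap.mulRight ℚ (-a) := by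
    ext y
    simp [Ring.lie_def, sub_eq_add_neg]
  rw [had, exp_add_of_commute (LinearMap.commute_mulLeft_right a (-a)) hl hr,
    exp_mulLeft ha, exp_mulRight ha.neg]
  simp [mul_assoc]

end IsNilpotent

noncomputable abbrev Module.End.algebraRat (R M : Type*) [CommRing R] [Algebra ℚ R]
    [AddCommGroup M] [Module R M] : Algebra ℚ (Module.End R M) :=
  Algebra.compHom _ (algebraMap ℚ R)

theorem Module.End.algebraRat_smul {R M : Type*} [CommRing R] [Algebra ℚ R] [AddCommGroup M]
    [Module R M] (q : ℚ) (f : Module.End R M) :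
    letI := Module.End.algebraRat R M
    q • f = algebraMap ℚ R q • f :=
  rfl

namespace LieAlgebra

variable {R : Type*} [CommRing R] [Algebra ℚ R] {L : Type*} [LieRing L] [LieAlgebra R L]

attribute [local instance] Module.End.algebraRat LieRing.ofAssociativeRing

theorem ad_ad_pow_apply_ad (A y : L) (n : ℕ) :
    (ad ℚ (Module.End R L) (ad R L A) ^ n) (ad R L y) = ad R L ((ad R L A ^ n) y) := by
  induction n with
  | zero => simp
  | succ n ih =>
    rw [pow_succ', pow_succ', Module.End.mul_apply, ih, ad_apply, ← LieHom.map_lie,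
      Module.End.mul_apply, ad_apply]

theorem ad_ad_apply_of_derivation (δ : L →ₗ[R] L)
    (hδ : ∀ x y : L, δ ⁅x, y⁆ = ⁅δ x, y⁆ + ⁅x, δ y⁆) (A : L) :
    ad ℚ (Module.End R L) (ad R L A) δ = -ad R L (δ A) := by
  ext x
  simp [Ring.lie_def, hδ]

theorem exp_ad_ad_apply_ad {A : L} (hA : IsNilpotent (ad R L A)) (y : L) :
    IsNilpotent.exp (ad ℚ (Module.End R L) (ad R L A)) (ad R L y) =
      ad R L (IsNilpotent.exp (ad R L A) y) := by
  obtain ⟨N, hN⟩ := hA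
  have hvan : (ad ℚ (Module.End R L) (ad R L A) ^ N) • ad R L y = 0 := by
    rw [Module.End.smul_def, ad_ad_pow_apply_ad, hN, LinearMap.zero_apply, map_zero]
  rw [← Module.End.smul_def,
    IsNilpotent.exp_smul_eq_sum hvan (ad_nilpotent_of_nilpotent ⟨N, hN⟩),
    IsNilpotent.exp_eq_sum hN, LinearMap.sum_apply, map_sum]
  simp only [Module.End.smul_def, ad_ad_pow_apply_ad, Module.End.algebraRat_smul,
    LinearMap.smul_apply, map_smul]

theorem exp_ad_ad_apply_of_derivation (δ : L →ₗ[R] L)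
    (hδ : ∀ x y : L, δ ⁅x, y⁆ = ⁅δ x, y⁆ + ⁅x, δ y⁆) {A : L} {N : ℕ} (hN : ad R L A ^ N = 0) :
    IsNilpotent.exp (ad ℚ (Module.End R L) (ad R L A)) δ =
      δ - ad R L (∑ q ∈ range N, algebraMap ℚ R (1 / ((q + 1).factorial : ℚ)) •
        (ad R L A ^ q) (δ A)) := by
  have hpow : ∀ q, (ad ℚ (Module.End R L) (ad R L A) ^ (q + 1)) δ =
      -ad R L ((ad R L A ^ q) (δ A)) := fun q => by
    rw [pow_succ, Module.End.mul_apply, ad_ad_apply_of_derivation δ hδ, map_neg,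
      ad_ad_pow_apply_ad]
  have hvan : (ad ℚ (Module.End R L) (ad R L A) ^ (N + 1)) • (δ : Module.End R L) = 0 := by
    rw [Module.End.smul_def, hpow, hN, LinearMap.zero_apply, map_zero, neg_zero]
  rw [← Module.End.smul_def,
    IsNilpotent.exp_smul_eq_sum hvan (ad_nilpotent_of_nilpotent ⟨N, hN⟩), sum_range_succ']
  simp only [Module.End.smul_def, hpow, map_sum, map_smul, Module.End.algebraRat_smul, smul_neg,
    sum_neg_distrib, one_div, Nat.factorial_zero, Nat.cast_one, inv_one, pow_zero, one_smul]
  exact neg_add_eq_sub _ _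

end LieAlgebra

/-- Gauge-transformation formula of Section 3 of Cao–Zhou, ungraded form: for a
Lie derivation `δ` of `L`, `ω ∈ L`, and `A ∈ L` with `(ad_A)^N = 0`, letting
`E = exp(ad_A)` and `Eneg = exp(-ad_A)` (finite sums), conjugating the deformed
operator `δ + ad_ω` by `exp(ad_A)` gives `δ + ad_{ω'}` with
`ω' = E ω - Σ_q (1/(q+1)!) • ((ad_A)^q)(δ A)`, the gauge transform `e^A · ω`. -/
theorem stmt10 {R : Type*} [CommRing R] [Algebra ℚ R]
    {L : Type*} [LieRing L] [LieAlgebra R L]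
    (δ' : L →ₗ[R] L) (hδ' : ∀ x y : L, δ' ⁅x, y⁆ = ⁅δ' x, y⁆ + ⁅x, δ' y⁆)
    (A ω : L) (N : ℕ) (hN : (LieAlgebra.ad R L A) ^ N = 0)
    (E Eneg : Module.End R L)
    (hE : E = ∑ n ∈ Finset.range N,
        algebraMap ℚ R (1 / (n.factorial : ℚ)) • (LieAlgebra.ad R L A) ^ n)
    (hEneg : Eneg = ∑ n ∈ Finset.range N,
        algebraMap ℚ R (1 / (n.factorial : ℚ)) • (-(LieAlgebra.ad R L A)) ^ n) :
    E * (δ' + LieAlgebra.ad R L ω) * Eneg =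
      δ' + LieAlgebra.ad R L
        (E ω - ∑ q ∈ Finset.range N,
          algebraMap ℚ R (1 / ((q + 1).factorial : ℚ)) •
            ((LieAlgebra.ad R L A) ^ q) (δ' A)) := by
  let _ := Module.End.algebraRat R L
  have hA : IsNilpotent (LieAlgebra.ad R L A) := ⟨N, hN⟩
  have hE' : E = IsNilpotent.exp (LieAlgebra.ad R L A) := by
    rw [hE, IsNilpotent.exp_eq_sum hN]
    simp only [one_div, Module.End.algebraRat_smul]
  have hEneg' : Eneg = IsNilpotent.exp (-LieAlgebra.ad R L A) := by
    rw [hEneg, IsNilpotent.exp_eq_sum (by rw [neg_pow, hN, mul_zero])]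
    simp only [one_div, Module.End.algebraRat_smul]
  rw [hE', hEneg', IsNilpotent.exp_mul_mul_exp_neg hA, map_add,
    LieAlgebra.exp_ad_ad_apply_of_derivation δ' hδ' hN, LieAlgebra.exp_ad_ad_apply_ad hA, map_sub]
  abel
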